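/- Let q be a prime power and F the finite field with q² elements, with Ψ(v,w) = v₁^q·w₁ − v₂^q·w₃ − v₃^q·w₂ on F³. If v, w ∈ F³ are linearly independent over F and satisfy Ψ(v,v) = 0 and Ψ(w,w) = 0, then Ψ(v,w) ≠ 0. Equivalently, F³ contains no 2-dimensional subspace on which Ψ vanishes identically. -/

import Mathlib

/-!
Let `v̄` denote `v` with the Frobenius `x ↦ x ^ q` applied to each coordinate; since
`|F| = q²` this is an involutive automorphism of `F`. Then `Ψ(v, w) = B(v̄, w)` for the
nondegenerate symmetric bilinear form `B` with Gram matrix `hermGram`, and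
`Ψ(w, v) = Ψ(v, w) ^ q`. If `v, w` span a totally isotropic plane, the plane spanned by
`v̄, w̄` is `B`-orthogonal to it, so `2 + 2 ≤ 3`.
-/

/-- The Hermitian sesquilinear form Ψ(v,w) = v₁^q·w₁ − v₂^q·w₃ − v₃^q·w₂. -/
def hermPsi (q : ℕ) {F : Type*} [Field F] (v w : Fin 3 → F) : F :=
  v 0 ^ q * w 0 - v 1 ^ q * w 2 - v 2 ^ q * w 1

open Module
open LinearMap (BilinForm)

namespace LinearMap.BilinForm

variable {K V : Type*} [Field K] [AddCommGroup V] [Module K V] {B : BilinForm K V}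

theorem span_le_orthogonal_span {s t : Set V} (h : ∀ x ∈ s, ∀ y ∈ t, B x y = 0) :
    Submodule.span K t ≤ B.orthogonal (Submodule.span K s) := by
  rw [Submodule.span_le]
  intro y hy x hx
  have : Submodule.span K s ≤ LinearMap.ker (B.flip y) :=
    Submodule.span_le.mpr fun x hx => h x hx y hy
  exact this hx

theorem finrank_add_finrank_le_of_le_orthogonal [FiniteDimensional K V] (hB : B.Nondegenerate)
    {U W : Submodule K V} (h : W ≤ B.orthogonal U) :
    finrank K U + finrank K W ≤ finrank K V := by
  have := (Submodule.finrank_mono h).trans_eq (finrank_orthogonal hB U)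
  have := U.finrank_le
  omega

theorem card_add_card_le_finrank [FiniteDimensional K V] (hB : B.Nondegenerate)
    {ι κ : Type*} [Fintype ι] [Fintype κ] {u : ι → V} {v : κ → V}
    (hu : LinearIndependent K u) (hv : LinearIndependent K v) (h : ∀ i j, B (u i) (v j) = 0) :
    Fintype.card ι + Fintype.card κ ≤ finrank K V := by
  rw [← finrank_span_eq_card hu, ← finrank_span_eq_card hv]
  refine finrank_add_finrank_le_of_le_orthogonal hB (span_le_orthogonal_span ?_)
  rintro _ ⟨i, rfl⟩ _ ⟨j, rfl⟩
  exact h i j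

end LinearMap.BilinForm

theorem LinearIndependent.ringHom_comp {K ι κ : Type*} [Field K] {v : κ → ι → K}
    (hv : LinearIndependent K v) {σ : K →+* K} (hσ : Function.Surjective σ) :
    LinearIndependent K fun i => σ ∘ v i :=
  hv.map_of_surjective_injectiveₛ σ (σ.toAddMonoidHom.compLeft ι) hσ σ.injective.comp_left
    fun r m => by ext; simp

theorem LinearMap.BilinForm.two_mul_card_le_of_isotropic {K ι κ : Type*} [Field K] [Fintype ι]
    [Fintype κ] {B : BilinForm K (ι → K)} (hB : B.Nondegenerate) {σ : K →+* K}
    (hσ : Function.Surjective σ) {v : κ → ι → K} (hv : LinearIndependent K v)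
    (h : ∀ i j, B (σ ∘ v i) (v j) = 0) : 2 * Fintype.card κ ≤ Fintype.card ι := by
  have := card_add_card_le_finrank hB (hv.ringHom_comp hσ) hv h
  rw [Module.finrank_fintype_fun_eq_card] at this
  omega

theorem FiniteField.exists_ringHom_eq_pow_of_card_eq_sq {F : Type*} [Field F] [Fintype F]
    {q : ℕ} (hcard : Fintype.card F = q ^ 2) : ∃ σ : F →+* F, ∀ x, σ x = x ^ q := by
  obtain ⟨p, _, n, hp, hn⟩ := FiniteField.card' F
  have : Fact p.Prime := ⟨hp⟩
  have hq : q ∣ p ^ (n : ℕ) := hn ▸ hcard ▸ dvd_pow_self q two_ne_zero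
  obtain ⟨j, -, rfl⟩ := (Nat.dvd_prime_pow hp).mp hq
  exact ⟨iterateFrobenius F p j, fun _ => iterateFrobenius_def ..⟩

def hermGram (K : Type*) [Field K] : Matrix (Fin 3) (Fin 3) K :=
  !![1, 0, 0; 0, 0, -1; 0, -1, 0]

theorem nondegenerate_toBilin'_hermGram (K : Type*) [Field K] :
    (hermGram K).toBilin'.Nondegenerate :=
  BilinForm.nondegenerate_toBilin'_of_det_ne_zero' _ (by simp [hermGram, Matrix.det_fin_three])

section

variable {K : Type*} [Field K] {q : ℕ} {σ : K →+* K}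

theorem hermPsi_eq_toBilin' (hσ : ∀ x, σ x = x ^ q) (v w : Fin 3 → K) :
    hermPsi q v w = (hermGram K).toBilin' (σ ∘ v) w := by
  simp [hermPsi, hermGram, Matrix.toBilin'_apply, Fin.sum_univ_three, hσ]
  ring

theorem hermPsi_swap (hσ : ∀ x, σ x = x ^ q) (hinv : Function.Involutive σ)
    (v w : Fin 3 → K) : hermPsi q w v = σ (hermPsi q v w) := by
  simp only [hermPsi, map_sub, map_mul, ← hσ, hinv _]
  ring

end

theorem psi_no_isotropic_plane_general (q : ℕ) (F : Type*) [Field F] [Fintype F]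
    (hcard : Fintype.card F = q ^ 2) :
    (∀ v w : Fin 3 → F, LinearIndependent F ![v, w] →
      hermPsi q v v = 0 → hermPsi q w w = 0 → hermPsi q v w ≠ 0) ∧
    (∀ W : Submodule F (Fin 3 → F), Module.finrank F W = 2 →
      ¬ (∀ x ∈ W, ∀ y ∈ W, hermPsi q x y = 0)) := by
  obtain ⟨σ, hσ⟩ := FiniteField.exists_ringHom_eq_pow_of_card_eq_sq hcard
  have hinv : Function.Involutive σ := fun x => by
    rw [hσ, hσ, ← pow_mul, ← sq, ← hcard, FiniteField.pow_card]
  have no_isotropic_pair (v : Fin 2 → Fin 3 → F) (hv : LinearIndependent F v)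
      (h : ∀ i j, hermPsi q (v i) (v j) = 0) : False := by
    have := BilinForm.two_mul_card_le_of_isotropic (nondegenerate_toBilin'_hermGram F)
      hinv.surjective hv fun i j => hermPsi_eq_toBilin' hσ (v i) (v j) ▸ h i j
    simp at this
  refine ⟨fun v w hli hvv hww hvw => no_isotropic_pair ![v, w] hli ?_, fun W hW hiso => ?_⟩
  · have hwv : hermPsi q w v = 0 := by rw [hermPsi_swap hσ hinv, hvw, map_zero]
    intro i j
    fin_cases i <;> fin_cases j <;> assumption
  · let b := Module.finBasisOfFinrankEq F W hW
    exact no_isotropic_pair (W.subtype ∘ b) (b.linearIndependent.map' _ W.ker_subtype)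
      fun i j => hiso _ (b i).2 _ (b j).2

/-- If v, w are linearly independent with Ψ(v,v) = Ψ(w,w) = 0, then Ψ(v,w) ≠ 0;
equivalently, no 2-dimensional subspace of F³ is totally isotropic for Ψ. -/
theorem psi_no_isotropic_plane (q : ℕ) (hq : IsPrimePow q) (F : Type*) [Field F] [Fintype F]
    (hcard : Fintype.card F = q ^ 2) :
    (∀ v w : Fin 3 → F, LinearIndependent F ![v, w] →
      hermPsi q v v = 0 → hermPsi q w w = 0 → hermPsi q v w ≠ 0) ∧
    (∀ W : Submodule F (Fin 3 → F), Module.finrank F W = 2 →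
      ¬ (∀ x ∈ W, ∀ y ∈ W, hermPsi q x y = 0)) :=
  psi_no_isotropic_plane_general q F hcard
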